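/- Let G be a triangle-free graph in W₂ with α(G) ≥ 2. Then for every edge ab of G, the graph G_{ab} = G \ (N_G(a) ∪ N_G(b)) satisfies α(G_{ab}) = α(G) − 1. -/

import Mathlib

/-!
Adding `a` to an independent set of `G_{ab}` shows `α(G_{ab}) + 1 ≤ α(G)`. For the converse,
the `W₂` property lets one delete any vertex `c` of a maximum independent set and replace it by
a neighbour `d` of `c`; when `c ∈ N(b)`, triangle-freeness forces `d ∉ N(b)`. Starting from a
maximum independent set through `a` and trading away its vertices in `N(b) \ {a}` one by one
yields a maximum independent set `T ∋ a` with `T \ {a}` inside `G_{ab}`.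
-/

open Finset

section EdgeIdealPaper

variable {V : Type*} [Fintype V] [DecidableEq V]

/-- `S` is an independent set of vertices in `G`. -/
def IsIndep (G : SimpleGraph V) (S : Finset V) : Prop :=
  ∀ u ∈ S, ∀ v ∈ S, ¬ G.Adj u v

/-- `S` is a maximal independent set of the induced subgraph of `G` on `A`. -/
def IsMaxIndepIn (G : SimpleGraph V) (A S : Finset V) : Prop :=
  S ⊆ A ∧ IsIndep G S ∧ ∀ v ∈ A, v ∉ S → ¬ IsIndep G (insert v S)

open scoped Classical in
/-- The independence number of the induced subgraph of `G` on `A`. -/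
noncomputable def alphaIn (G : SimpleGraph V) (A : Finset V) : ℕ :=
  ((A.powerset).filter (fun S => IsIndep G S)).sup Finset.card

/-- The induced subgraph of `G` on `A` is well-covered. -/
def WellCoveredIn (G : SimpleGraph V) (A : Finset V) : Prop :=
  ∀ S, IsMaxIndepIn G A S → S.card = alphaIn G A

/-- The induced subgraph of `G` on `A` is in the class `W₂`. -/
def W2In (G : SimpleGraph V) (A : Finset V) : Prop :=
  WellCoveredIn G A ∧
    ∀ x ∈ A, WellCoveredIn G (A.erase x) ∧ alphaIn G (A.erase x) = alphaIn G A

open scoped Classical in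
/-- The neighborhood of a vertex `a` in `G`, as a `Finset`. -/
noncomputable def nbr (G : SimpleGraph V) (a : V) : Finset V :=
  univ.filter (fun v => G.Adj a v)

open scoped Classical in
/-- The neighborhood `N_G(S)` of a set `S` of vertices: vertices outside `S`
adjacent to some vertex of `S`. -/
noncomputable def nbrSet (G : SimpleGraph V) (S : Finset V) : Finset V :=
  univ.filter (fun v => v ∉ S ∧ ∃ u ∈ S, G.Adj u v)

/-- The vertex set of the localization `G_S = G \ (S ∪ N_G(S))`. -/
noncomputable def loc (G : SimpleGraph V) (S : Finset V) : Finset V :=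
  univ \ (S ∪ nbrSet G S)

/-- The vertex set of `G_{ab} = G \ (N_G(a) ∪ N_G(b))`. -/
noncomputable def locE (G : SimpleGraph V) (a b : V) : Finset V :=
  univ \ (nbr G a ∪ nbr G b)

/-- The induced subgraph of `G` on `A` has no isolated vertices. -/
def NoIsolatedIn (G : SimpleGraph V) (A : Finset V) : Prop :=
  ∀ v ∈ A, ∃ u ∈ A, G.Adj v u

open scoped Classical in
/-- The reduced Euler characteristic `∑_{F} (-1)^{|F|-1}` (the empty face
contributing `-1`) of the independence complex of the induced subgraph of `G` on `A`. -/
noncomputable def indEuler (G : SimpleGraph V) (A : Finset V) : ℤ :=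
  -∑ S ∈ (A.powerset).filter (fun S => IsIndep G S), (-1 : ℤ) ^ S.card

end EdgeIdealPaper

section IndependentSets

variable {V : Type*} {G : SimpleGraph V}

lemma IsIndep.mono {S T : Finset V} (hT : IsIndep G T) (h : S ⊆ T) : IsIndep G S :=
  fun u hu v hv => hT u (h hu) v (h hv)

lemma IsIndep.insert [DecidableEq V] {S : Finset V} {a : V} (hS : IsIndep G S)
    (ha : ∀ s ∈ S, ¬ G.Adj a s) : IsIndep G (insert a S) := by
  intro u hu v hv
  rw [mem_insert] at hu hv
  rcases hu with rfl | hu <;> rcases hv with rfl | hv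
  · exact G.irrefl
  · exact ha v hv
  · exact fun h => ha u hu h.symm
  · exact hS u hu v hv

lemma card_le_alphaIn {A S : Finset V} (hSA : S ⊆ A) (hS : IsIndep G S) :
    S.card ≤ alphaIn G A := by
  classical
  exact le_sup (f := card) (mem_filter.mpr ⟨mem_powerset.mpr hSA, hS⟩)

lemma isIndep_singleton (a : V) : IsIndep G {a} := fun u hu v hv => by
  rw [mem_singleton] at hu hv
  subst hu hv
  exact G.irrefl

lemma exists_isIndep_card_eq_alphaIn (A : Finset V) :
    ∃ S ⊆ A, IsIndep G S ∧ S.card = alphaIn G A := by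
  classical
  obtain ⟨S, hS, hSα⟩ := exists_mem_eq_sup (A.powerset.filter fun S => IsIndep G S)
    ⟨∅, mem_filter.mpr ⟨empty_mem_powerset A, fun u hu => absurd hu (notMem_empty u)⟩⟩ card
  rw [mem_filter, mem_powerset] at hS
  exact ⟨S, hS.1, hS.2, hSα.symm⟩

lemma exists_isMaxIndepIn_superset [DecidableEq V] {A S : Finset V} (hSA : S ⊆ A)
    (hS : IsIndep G S) : ∃ T, S ⊆ T ∧ IsMaxIndepIn G A T := by
  classical
  obtain ⟨T, hT, hTmax⟩ := exists_max_image
      (A.powerset.filter fun T => IsIndep G T ∧ S ⊆ T) card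
      ⟨S, mem_filter.mpr ⟨mem_powerset.mpr hSA, hS, Subset.refl S⟩⟩
  simp only [mem_filter, mem_powerset] at hT
  obtain ⟨hTA, hTindep, hST⟩ := hT
  refine ⟨T, hST, hTA, hTindep, fun v hvA hvT hindep => ?_⟩
  have hle := hTmax (insert v T) (mem_filter.mpr
    ⟨mem_powerset.mpr (insert_subset hvA hTA), hindep, hST.trans (subset_insert v T)⟩)
  rw [card_insert_of_notMem hvT] at hle
  omega

end IndependentSets

section Exchange

variable {V : Type*} [Fintype V] [DecidableEq V] {G : SimpleGraph V}

lemma exists_adj_isIndep_insert_erase {M : Finset V} {c : V}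
    (hwc : WellCoveredIn G (univ.erase c)) (hαc : alphaIn G (univ.erase c) = alphaIn G univ)
    (hM : IsIndep G M) (hMα : M.card = alphaIn G univ) (hc : c ∈ M) :
    ∃ d, G.Adj c d ∧ IsIndep G (insert d (M.erase c)) := by
  obtain ⟨T, hMT, hTmax⟩ := exists_isMaxIndepIn_superset
    (erase_subset_erase c (subset_univ M)) (hM.mono (erase_subset c M))
  have hTcard : (M.erase c).card + 1 = T.card := by
    rw [hwc T hTmax, hαc, card_erase_of_mem hc, ← hMα]
    have := card_pos.mpr ⟨c, hc⟩
    omega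
  obtain ⟨d, hdMc, rfl⟩ := exists_eq_insert_iff.mpr ⟨hMT, hTcard⟩
  have hdc : d ≠ c := ne_of_mem_erase (hTmax.1 (mem_insert_self d _))
  have hdM : d ∉ M := fun h => hdMc (mem_erase.mpr ⟨hdc, h⟩)
  refine ⟨d, ?_, hTmax.2.1⟩
  by_contra hcd
  have hindep : IsIndep G (insert d M) := hM.insert fun s hs hds => by
    by_cases hsc : s = c
    · exact hcd (hsc ▸ hds.symm)
    · exact hTmax.2.1 d (mem_insert_self d _) s (mem_insert_of_mem (mem_erase.mpr ⟨hsc, hs⟩)) hds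
  have := card_le_alphaIn (subset_univ _) hindep
  rw [card_insert_of_notMem hdM] at this
  omega

lemma exists_maximum_indep_inter_nbr_subset (htf : G.CliqueFree 3) (hw2 : W2In G univ)
    {a : V} (b : V) (M : Finset V) (hM : IsIndep G M) (hMα : M.card = alphaIn G univ)
    (haM : a ∈ M) :
    ∃ T, IsIndep G T ∧ T.card = alphaIn G univ ∧ a ∈ T ∧ T ∩ nbr G b ⊆ {a} := by
  induction hn : (M ∩ nbr G b).card using Nat.strong_induction_on generalizing M with
  | _ n ih =>
  by_cases hsub : M ∩ nbr G b ⊆ {a}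
  · exact ⟨M, hM, hMα, haM, hsub⟩
  obtain ⟨c, hcMb, hca⟩ : ∃ c ∈ M ∩ nbr G b, c ≠ a := by
    by_contra! h
    exact hsub fun x hx => mem_singleton.mpr (h x hx)
  have hcM : c ∈ M := (mem_inter.mp hcMb).1
  have hbc : G.Adj b c := by simpa [nbr] using (mem_inter.mp hcMb).2
  obtain ⟨d, hcd, hd⟩ := exists_adj_isIndep_insert_erase (hw2.2 c (mem_univ c)).1
    (hw2.2 c (mem_univ c)).2 hM hMα hcM
  have hdM : d ∉ M := fun h => hM c hcM d h hcd
  have hbd : ¬ G.Adj b d := fun hbd =>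
    htf {b, c, d} (SimpleGraph.is3Clique_triple_iff.mpr ⟨hbc, hbd, hcd⟩)
  have hinter : insert d (M.erase c) ∩ nbr G b = (M ∩ nbr G b).erase c := by
    ext x
    by_cases hxd : x = d
    · subst hxd
      simp [nbr, hbd, hdM]
    · simp [hxd, and_assoc]
  refine ih _ ?_ _ hd ?_ (mem_insert_of_mem (mem_erase.mpr ⟨hca.symm, haM⟩)) rfl
  · rw [← hn, hinter]
    exact card_erase_lt_of_mem hcMb
  · rw [card_insert_of_notMem (fun h => hdM (mem_of_mem_erase h)), card_erase_of_mem hcM, ← hMα]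
    have := card_pos.mpr ⟨c, hcM⟩
    omega

lemma alphaIn_locE_add_one_le {a b : V} (hab : G.Adj a b) :
    alphaIn G (locE G a b) + 1 ≤ alphaIn G univ := by
  obtain ⟨S, hSA, hS, hSα⟩ := exists_isIndep_card_eq_alphaIn (G := G) (locE G a b)
  have haS : a ∉ S := fun haS => by simpa [locE, nbr, hab.symm] using hSA haS
  have hindep : IsIndep G (insert a S) := hS.insert fun s hs has => by
    simpa [locE, nbr, has] using hSA hs
  rw [← hSα, ← card_insert_of_notMem haS]
  exact card_le_alphaIn (subset_univ _) hindep

lemma card_le_alphaIn_locE_add_one {a b : V} {T : Finset V} (hT : IsIndep G T) (haT : a ∈ T)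
    (hTb : T ∩ nbr G b ⊆ {a}) : T.card ≤ alphaIn G (locE G a b) + 1 := by
  have hsub : T.erase a ⊆ locE G a b := by
    intro v hv
    obtain ⟨hva, hvT⟩ := mem_erase.mp hv
    have hav : ¬ G.Adj a v := hT a haT v hvT
    have hbv : ¬ G.Adj b v := fun hbv =>
      hva (mem_singleton.mp (hTb (mem_inter.mpr ⟨hvT, by simpa [nbr] using hbv⟩)))
    simp [locE, nbr, hav, hbv]
  have := card_le_alphaIn hsub (hT.mono (erase_subset a T))
  rw [card_erase_of_mem haT] at this
  omega

end Exchange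

section EdgeIdealPaper

variable {V : Type*} [Fintype V] [DecidableEq V]

theorem stmt4_general (G : SimpleGraph V) (htf : G.CliqueFree 3)
    (hw2 : W2In G Finset.univ)
    (a b : V) (hab : G.Adj a b) :
    alphaIn G (locE G a b) = alphaIn G Finset.univ - 1 := by
  obtain ⟨M, haM, hM⟩ := exists_isMaxIndepIn_superset (G := G)
    (subset_univ {a}) (isIndep_singleton a)
  obtain ⟨T, hT, hTα, haT, hTb⟩ := exists_maximum_indep_inter_nbr_subset htf hw2 b M hM.2.1
    (hw2.1 M hM) (haM (mem_singleton_self a))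
  have hlower := card_le_alphaIn_locE_add_one hT haT hTb
  have hupper := alphaIn_locE_add_one_le hab
  omega

/-- For a triangle-free graph in `W₂` with `α(G) ≥ 2` and every edge `ab`,
`α(G_{ab}) = α(G) - 1`. -/
theorem stmt4 (G : SimpleGraph V) (htf : G.CliqueFree 3)
    (hw2 : W2In G Finset.univ) (hα : 2 ≤ alphaIn G Finset.univ)
    (a b : V) (hab : G.Adj a b) :
    alphaIn G (locE G a b) = alphaIn G Finset.univ - 1 :=
  stmt4_general G htf hw2 a b hab

end EdgeIdealPaper
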